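/- arXiv:1603.09649 — 7 statements merged into one kernel-verified Lean document; each statement's English description precedes it below -/
import Mathlib

section
/- Let f = (1/n)Σ fᵢ with each fᵢ twice differentiable and λI ⪯ ∇²f_S ⪯ ΛI for every subsample S, let w* minimize f, and let g = ∇f_S(x) − ∇f_S(w) + ∇f(w) where S is sampled uniformly. Then E‖g‖² ≤ 4Λ(f(x) − f(w*)) + 4(Λ−λ)(f(w) − f(w*)). -/
/-!
Write `g_S = a_S - (c_S - 𝔼 c)` with `a_S = ∇f_S(x) - ∇f_S(w*)` and
`c_S = ∇f_S(w) - ∇f_S(w*) - λ (w - w*)`; since `∇f(w*) = 0` and the sampling is unbiased,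
`𝔼 c = ∇f(w) - λ (w - w*)`. Then `‖g_S‖² ≤ 2‖a_S‖² + 2‖c_S - 𝔼 c‖²`, and a variance is at most
the second moment. Co-coercivity — for a `C²` function with `0 ⪯ ∇²φ ⪯ L`,
`‖∇φ(x) - ∇φ(y)‖² ≤ 2L D_φ(x, y)` with `D_φ` the Bregman divergence — applied to `f_S` bounds
`𝔼‖a_S‖²` by `2Λ (f(x) - f(w*))`, and applied to `f_S - λ‖·‖²/2`, whose Hessian lies between
`0` and `Λ - λ`, bounds `𝔼‖c_S‖²` by `2(Λ - λ)(f(w) - f(w*))`. Bregman divergences average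
linearly, and each index lies in `C(n-1, s-1)` of the `C(n, s)` subsets of size `s`.
-/

open Finset
open scoped RealInnerProductSpace

theorem le_add_deriv_add_half_of_deriv2_le {g g' g'' : ℝ → ℝ}
    (hg : ∀ t, HasDerivAt g (g' t) t) (hg' : ∀ t, HasDerivAt g' (g'' t) t) {C : ℝ}
    (hC : ∀ t, g'' t ≤ C) :
    g 1 ≤ g 0 + g' 0 + C / 2 := by
  have hh : ∀ t, HasDerivAt (fun t => C / 2 * t ^ 2 - g t) (C * t - g' t) t := fun t =>
    (((hasDerivAt_pow 2 t).const_mul (C / 2)).sub (hg t)).congr_deriv (by ring)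
  have hh' : ∀ t, HasDerivAt (fun t => C * t - g' t) (C - g'' t) t := fun t =>
    (((hasDerivAt_id t).const_mul C).sub (hg' t)).congr_deriv (by simp)
  have hconvex : ConvexOn ℝ Set.univ (fun t => C / 2 * t ^ 2 - g t) :=
    convexOn_of_hasDerivWithinAt2_nonneg convex_univ
      (fun t _ => (hh t).continuousAt.continuousWithinAt) (fun t _ => (hh t).hasDerivWithinAt)
      (fun t _ => (hh' t).hasDerivWithinAt) (fun t _ => sub_nonneg.2 (hC t))
  have := hconvex.le_slope_of_hasDerivAt (Set.mem_univ 0) (Set.mem_univ 1) one_pos (hh 0)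
  rw [slope_def_field] at this
  norm_num at this
  linarith

section NormedSpace

variable {E : Type*} [NormedAddCommGroup E] [NormedSpace ℝ E]

noncomputable def hessQuadForm (φ : E → ℝ) (x v : E) : ℝ := fderiv ℝ (fun y => fderiv ℝ φ y v) x v

theorem Differentiable.hasDerivAt_comp_add_smul {φ : E → ℝ} (hφ : Differentiable ℝ φ)
    (x u : E) (t : ℝ) :
    HasDerivAt (fun t : ℝ => φ (x + t • u)) (fderiv ℝ φ (x + t • u) u) t :=
  (hφ _).hasFDerivAt.comp_hasDerivAt t
    ((((hasDerivAt_id t).smul_const u).const_add x).congr_deriv (one_smul ℝ u))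

theorem ContDiff.differentiable_fderiv_apply {φ : E → ℝ} (hφ : ContDiff ℝ 2 φ) (v : E) :
    Differentiable ℝ (fun y => fderiv ℝ φ y v) :=
  ((hφ.fderiv_right le_rfl).differentiable one_ne_zero).clm_apply (differentiable_const v)

theorem ContDiff.le_add_fderiv_add_of_hessQuadForm_le {φ : E → ℝ} (hφ : ContDiff ℝ 2 φ) {L : ℝ}
    (hL : ∀ z v, hessQuadForm φ z v ≤ L * ‖v‖ ^ 2) (x u : E) :
    φ (x + u) ≤ φ x + fderiv ℝ φ x u + L * ‖u‖ ^ 2 / 2 := by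
  simpa using le_add_deriv_add_half_of_deriv2_le
    ((hφ.differentiable two_ne_zero).hasDerivAt_comp_add_smul x u)
    ((hφ.differentiable_fderiv_apply u).hasDerivAt_comp_add_smul x u) (fun t => hL _ u)

theorem ContDiff.add_fderiv_add_le_of_le_hessQuadForm {φ : E → ℝ} (hφ : ContDiff ℝ 2 φ) {m : ℝ}
    (hm : ∀ z v, m * ‖v‖ ^ 2 ≤ hessQuadForm φ z v) (x u : E) :
    φ x + fderiv ℝ φ x u + m * ‖u‖ ^ 2 / 2 ≤ φ (x + u) := by
  have := le_add_deriv_add_half_of_deriv2_le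
    (fun t => ((hφ.differentiable two_ne_zero).hasDerivAt_comp_add_smul x u t).neg)
    (fun t => ((hφ.differentiable_fderiv_apply u).hasDerivAt_comp_add_smul x u t).neg)
    (fun t => neg_le_neg (hm (x + t • u) u))
  simp only [Pi.neg_apply, zero_smul, add_zero, one_smul] at this
  linarith

end NormedSpace

section InnerProductSpace

variable {ι E : Type*} [NormedAddCommGroup E] [InnerProductSpace ℝ E]

theorem Differentiable.hasFDerivAt_sub_half_mul_norm_sq {φ : E → ℝ} (hφ : Differentiable ℝ φ)
    (c : ℝ) (z : E) :
    HasFDerivAt (fun y => φ y - c / 2 * ‖y‖ ^ 2) (fderiv ℝ φ z - c • innerSL ℝ z) z := by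
  refine ((hφ z).hasFDerivAt.fun_sub
    ((hasStrictFDerivAt_norm_sq z).hasFDerivAt.const_mul (c / 2))).congr_fderiv ?_
  ext v
  simp only [sub_apply, smul_apply, coe_innerSL_apply, nsmul_eq_mul, Nat.cast_ofNat, smul_eq_mul,
    sub_right_inj]
  ring

theorem ContDiff.hessQuadForm_sub_half_mul_norm_sq {φ : E → ℝ} (hφ : ContDiff ℝ 2 φ)
    (c : ℝ) (z v : E) :
    hessQuadForm (fun y => φ y - c / 2 * ‖y‖ ^ 2) z v = hessQuadForm φ z v - c * ‖v‖ ^ 2 := by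
  have hfun : (fun y => fderiv ℝ (fun y => φ y - c / 2 * ‖y‖ ^ 2) y v)
      = fun y => fderiv ℝ φ y v - c * ⟪v, y⟫ := by
    funext y
    rw [((hφ.differentiable two_ne_zero).hasFDerivAt_sub_half_mul_norm_sq c y).fderiv]
    simp [real_inner_comm]
  have hinner : HasFDerivAt (fun y : E => c * ⟪v, y⟫) (c • innerSL ℝ v) z :=
    (innerSL ℝ v).hasFDerivAt.const_mul c
  rw [hessQuadForm, hfun,
    ((hφ.differentiable_fderiv_apply v z).hasFDerivAt.fun_sub hinner).fderiv]
  simp [hessQuadForm]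

theorem sum_norm_sub_sq_le_sum_norm_sq (F : Finset ι) (c : ι → E) {μ : E}
    (hμ : ∑ S ∈ F, c S = (#F : ℝ) • μ) :
    ∑ S ∈ F, ‖c S - μ‖ ^ 2 ≤ ∑ S ∈ F, ‖c S‖ ^ 2 := by
  have hexpand : ∑ S ∈ F, ‖c S - μ‖ ^ 2 = ∑ S ∈ F, ‖c S‖ ^ 2 - #F * ‖μ‖ ^ 2 := by
    simp_rw [norm_sub_sq_real, sum_add_distrib, sum_sub_distrib, ← mul_sum, ← sum_inner, hμ,
      real_inner_smul_left, real_inner_self_eq_norm_sq, sum_const, nsmul_eq_mul]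
    ring
  rw [hexpand]
  exact sub_le_self _ (by positivity)

variable [CompleteSpace E]

noncomputable def bregmanDiv (φ : E → ℝ) (x y : E) : ℝ := φ x - φ y - ⟪gradient φ y, x - y⟫

theorem ContDiff.norm_sub_gradient_sq_le_bregmanDiv {φ : E → ℝ} (hφ : ContDiff ℝ 2 φ) {L : ℝ}
    (hL₀ : 0 ≤ L) (hconvex : ∀ z v, 0 ≤ hessQuadForm φ z v)
    (hL : ∀ z v, hessQuadForm φ z v ≤ L * ‖v‖ ^ 2) (x y : E) :
    ‖gradient φ x - gradient φ y‖ ^ 2 ≤ 2 * L * bregmanDiv φ x y := by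
  set G := gradient φ x - gradient φ y
  set D := bregmanDiv φ x y
  -- The upper bound around `x` and the lower bound around `y`, both at `x - t • G`, give a
  -- quadratic in `t` that is nonnegative; its discriminant is the claim.
  have hquad : ∀ t : ℝ, 0 ≤ L * ‖G‖ ^ 2 / 2 * (t * t) + -‖G‖ ^ 2 * t + D := by
    intro t
    have hup := hφ.le_add_fderiv_add_of_hessQuadForm_le hL x (-(t • G))
    have hlow := hφ.add_fderiv_add_le_of_le_hessQuadForm (m := 0) (by simpa using hconvex) y
      (x + -(t • G) - y)
    rw [add_sub_cancel] at hlow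
    have hG : ⟪gradient φ x, G⟫ - ⟪gradient φ y, G⟫ = ‖G‖ ^ 2 := by
      rw [← inner_sub_left, real_inner_self_eq_norm_sq]
    simp only [← inner_gradient_left, inner_neg_right, inner_smul_right, inner_sub_right,
      inner_add_right, norm_neg, norm_smul, mul_pow, Real.norm_eq_abs, sq_abs, zero_mul,
      zero_div, add_zero] at hup hlow
    have htG : t * ⟪gradient φ x, G⟫ - t * ⟪gradient φ y, G⟫ = t * ‖G‖ ^ 2 := by
      rw [← mul_sub, hG]
    simp only [D, bregmanDiv, inner_sub_right]
    linarith
  have hD : 0 ≤ D := by simpa using hquad 0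
  have := discrim_le_zero hquad
  rw [discrim] at this
  nlinarith [sq_nonneg ‖G‖, mul_nonneg hL₀ hD]

theorem Differentiable.gradient_sub_half_mul_norm_sq {φ : E → ℝ} (hφ : Differentiable ℝ φ)
    (c : ℝ) (z : E) :
    gradient (fun y => φ y - c / 2 * ‖y‖ ^ 2) z = gradient φ z - c • z := by
  refine ext_inner_right ℝ fun v => ?_
  rw [inner_gradient_left, (hφ.hasFDerivAt_sub_half_mul_norm_sq c z).fderiv, inner_sub_left,
    real_inner_smul_left, inner_gradient_left]
  simp

theorem Differentiable.bregmanDiv_sub_half_mul_norm_sq {φ : E → ℝ} (hφ : Differentiable ℝ φ)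
    (c : ℝ) (x y : E) :
    bregmanDiv (fun y => φ y - c / 2 * ‖y‖ ^ 2) x y = bregmanDiv φ x y - c / 2 * ‖x - y‖ ^ 2 := by
  rw [bregmanDiv, bregmanDiv, hφ.gradient_sub_half_mul_norm_sq, inner_sub_left,
    real_inner_smul_left, norm_sub_sq_real]
  simp only [inner_sub_right, real_inner_self_eq_norm_sq]
  rw [real_inner_comm x y]
  ring

theorem ContDiff.norm_sub_gradient_sub_smul_sq_le {φ : E → ℝ} (hφ : ContDiff ℝ 2 φ) {m L : ℝ}
    (hmL : m ≤ L) (hm : ∀ z v, m * ‖v‖ ^ 2 ≤ hessQuadForm φ z v)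
    (hL : ∀ z v, hessQuadForm φ z v ≤ L * ‖v‖ ^ 2) (x y : E) :
    ‖gradient φ x - gradient φ y - m • (x - y)‖ ^ 2
      ≤ 2 * (L - m) * (bregmanDiv φ x y - m / 2 * ‖x - y‖ ^ 2) := by
  have hφ₁ := hφ.differentiable two_ne_zero
  have hψ : ContDiff ℝ 2 (fun y => φ y - m / 2 * ‖y‖ ^ 2) :=
    hφ.sub (contDiff_const.mul (contDiff_norm_sq ℝ))
  have key := hψ.norm_sub_gradient_sq_le_bregmanDiv (sub_nonneg.2 hmL)
    (fun z v => by rw [hφ.hessQuadForm_sub_half_mul_norm_sq]; linarith [hm z v])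
    (fun z v => by rw [hφ.hessQuadForm_sub_half_mul_norm_sq]; linarith [hL z v]) x y
  rw [smul_sub, sub_sub_sub_comm]
  rwa [hφ₁.gradient_sub_half_mul_norm_sq, hφ₁.gradient_sub_half_mul_norm_sq,
    hφ₁.bregmanDiv_sub_half_mul_norm_sq] at key

theorem gradient_smul_sum (T : Finset ι) {f : ι → E → ℝ} {y : E}
    (hf : ∀ i ∈ T, DifferentiableAt ℝ (f i) y) (c : ℝ) :
    gradient (fun z => c • ∑ i ∈ T, f i z) y = c • ∑ i ∈ T, gradient (f i) y := by
  rw [gradient, fderiv_fun_const_smul (DifferentiableAt.fun_sum hf), fderiv_fun_sum hf, map_smul,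
    map_sum]
  rfl

variable {F : Finset ι} {φ : ι → E → ℝ} {φbar : E → ℝ}

theorem sum_gradient_eq_card_smul_gradient (hF : F.Nonempty)
    (hφ : ∀ S ∈ F, Differentiable ℝ (φ S)) (hmean : ∀ y, ∑ S ∈ F, φ S y = #F * φbar y) (y : E) :
    ∑ S ∈ F, gradient (φ S) y = (#F : ℝ) • gradient φbar y := by
  have hF' : (#F : ℝ) ≠ 0 := by exact_mod_cast hF.card_ne_zero
  have hφbar : φbar = fun z => (#F : ℝ)⁻¹ • ∑ S ∈ F, φ S z := by
    funext z
    rw [hmean, smul_eq_mul, inv_mul_cancel_left₀ hF']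
  rw [hφbar, gradient_smul_sum F (fun S hS => hφ S hS y), smul_inv_smul₀ hF']

theorem sum_bregmanDiv (hF : F.Nonempty) (hφ : ∀ S ∈ F, Differentiable ℝ (φ S))
    (hmean : ∀ y, ∑ S ∈ F, φ S y = #F * φbar y) (x y : E) :
    ∑ S ∈ F, bregmanDiv (φ S) x y = #F * bregmanDiv φbar x y := by
  simp only [bregmanDiv, sum_sub_distrib, hmean, ← sum_inner,
    sum_gradient_eq_card_smul_gradient hF hφ hmean, real_inner_smul_left]
  ring

theorem sum_norm_sq_svrg_le (hF : F.Nonempty) (hφ : ∀ S ∈ F, ContDiff ℝ 2 (φ S))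
    (hmean : ∀ y, ∑ S ∈ F, φ S y = #F * φbar y) {lam Lam : ℝ} (hlam : 0 ≤ lam) (hll : lam ≤ Lam)
    (hhess : ∀ S ∈ F, ∀ z v, lam * ‖v‖ ^ 2 ≤ hessQuadForm (φ S) z v ∧
      hessQuadForm (φ S) z v ≤ Lam * ‖v‖ ^ 2)
    {wstar : E} (hmin : ∀ x, φbar wstar ≤ φbar x) (x w : E) :
    ∑ S ∈ F, ‖gradient (φ S) x - gradient (φ S) w + gradient φbar w‖ ^ 2
      ≤ #F * (4 * Lam * (φbar x - φbar wstar) + 4 * (Lam - lam) * (φbar w - φbar wstar)) := by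
  have hφ₁ : ∀ S ∈ F, Differentiable ℝ (φ S) := fun S hS => (hφ S hS).differentiable two_ne_zero
  have hgrad₀ : gradient φbar wstar = 0 := by
    rw [gradient, IsLocalMin.fderiv_eq_zero (Filter.Eventually.of_forall hmin), map_zero]
  have hbregman : ∀ y, ∑ S ∈ F, bregmanDiv (φ S) y wstar = #F * (φbar y - φbar wstar) := by
    intro y
    rw [sum_bregmanDiv hF hφ₁ hmean, bregmanDiv, hgrad₀, inner_zero_left, sub_zero]
  set a := fun S => gradient (φ S) x - gradient (φ S) wstar
  set c := fun S => gradient (φ S) w - gradient (φ S) wstar - lam • (w - wstar)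
  set μ := gradient φbar w - lam • (w - wstar)
  have hcμ : ∑ S ∈ F, c S = (#F : ℝ) • μ := by
    simp only [c, μ, sum_sub_distrib, sum_gradient_eq_card_smul_gradient hF hφ₁ hmean, hgrad₀,
      sum_const, ← Nat.cast_smul_eq_nsmul ℝ]
    module
  have ha : ∑ S ∈ F, ‖a S‖ ^ 2 ≤ 2 * Lam * (#F * (φbar x - φbar wstar)) := by
    rw [← hbregman, mul_sum]
    exact sum_le_sum fun S hS => (hφ S hS).norm_sub_gradient_sq_le_bregmanDiv (hlam.trans hll)
      (fun z v => (mul_nonneg hlam (sq_nonneg _)).trans (hhess S hS z v).1)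
      (fun z v => (hhess S hS z v).2) x wstar
  have hc : ∑ S ∈ F, ‖c S‖ ^ 2 ≤ 2 * (Lam - lam) * (#F * (φbar w - φbar wstar)) := by
    rw [← hbregman, mul_sum]
    refine sum_le_sum fun S hS => ((hφ S hS).norm_sub_gradient_sub_smul_sq_le hll
      (fun z v => (hhess S hS z v).1) (fun z v => (hhess S hS z v).2) w wstar).trans ?_
    exact mul_le_mul_of_nonneg_left (sub_le_self _ (by positivity)) (by linarith)
  calc ∑ S ∈ F, ‖gradient (φ S) x - gradient (φ S) w + gradient φbar w‖ ^ 2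
      = ∑ S ∈ F, ‖a S - (c S - μ)‖ ^ 2 :=
        sum_congr rfl fun S _ => by simp only [a, c, μ]; congr 2; abel
    _ ≤ ∑ S ∈ F, 2 * (‖a S‖ ^ 2 + ‖c S - μ‖ ^ 2) := sum_le_sum fun S _ =>
        (pow_le_pow_left₀ (norm_nonneg _) (norm_sub_le _ _) 2).trans add_sq_le
    _ ≤ 2 * (∑ S ∈ F, ‖a S‖ ^ 2 + ∑ S ∈ F, ‖c S‖ ^ 2) := by
        rw [← mul_sum, sum_add_distrib]
        linarith [sum_norm_sub_sq_le_sum_norm_sq F c hcμ]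
    _ ≤ _ := by linarith

end InnerProductSpace

theorem Finset.sum_powersetCard_sum {α M : Type*} [DecidableEq α] [AddCommMonoid M]
    (T : Finset α) {s : ℕ} (hs : 0 < s) (v : α → M) :
    ∑ S ∈ T.powersetCard s, ∑ i ∈ S, v i = (#T - 1).choose (s - 1) • ∑ i ∈ T, v i := by
  rw [Finset.sum_comm' (t' := T) (s' := fun i => (T.powersetCard s).filter (i ∈ ·))
    (fun S i => by simp only [mem_filter, mem_powersetCard]; grind), smul_sum]
  refine sum_congr rfl fun i hi => ?_
  simp_rw [sum_const, ← singleton_subset_iff,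
    card_filter_powersetCard_subset {i} T s (singleton_subset_iff.2 hi) hs, card_singleton]

theorem Finset.sum_powersetCard_inv_card_smul_sum {α M : Type*} [DecidableEq α] [AddCommGroup M]
    [Module ℝ M] (T : Finset α) {s : ℕ} (hs : 0 < s) (hsT : s ≤ #T) (v : α → M) :
    ∑ S ∈ T.powersetCard s, (#S : ℝ)⁻¹ • ∑ i ∈ S, v i
      = (#(T.powersetCard s) : ℝ) • (#T : ℝ)⁻¹ • ∑ i ∈ T, v i := by
  have hchoose :
      (s : ℝ)⁻¹ * ((#T - 1).choose (s - 1) : ℕ) = ((#T).choose s : ℝ) * (#T : ℝ)⁻¹ := by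
    obtain ⟨m, hm⟩ : ∃ m, #T = m + 1 := ⟨#T - 1, by omega⟩
    obtain ⟨t, rfl⟩ : ∃ t, s = t + 1 := ⟨s - 1, by omega⟩
    have := Nat.add_one_mul_choose_eq m t
    rw [hm]
    field_simp
    norm_cast
    simp only [Nat.add_sub_cancel]
    linarith
  rw [sum_congr rfl fun S hS => by rw [(mem_powersetCard.1 hS).2], ← smul_sum,
    sum_powersetCard_sum T hs, ← Nat.cast_smul_eq_nsmul ℝ, smul_smul, hchoose, card_powersetCard,
    mul_smul]

/-- Minibatch SVRG variance-reduced gradient bound: if `f = (1/n) Σ fᵢ`, every subsampled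
function `f_S` has Hessian bounded as `λI ⪯ ∇²f_S ⪯ ΛI`, `wstar` minimizes `f`, and
`g_S = ∇f_S(x) − ∇f_S(w) + ∇f(w)` with `S` uniform over subsets of size `s`, then
`E‖g_S‖² ≤ 4Λ(f(x) − f(wstar)) + 4(Λ−λ)(f(w) − f(wstar))`. -/
theorem svrg_variance_reduced_gradient_bound {d n : ℕ}
    (f : Fin n → EuclideanSpace ℝ (Fin d) → ℝ)
    (lam Lam : ℝ) (hlam : 0 < lam) (hll : lam ≤ Lam)
    (hdiff : ∀ i, ContDiff ℝ 2 (f i))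
    (fbar : EuclideanSpace ℝ (Fin d) → ℝ)
    (hfbar : fbar = fun x => (n : ℝ)⁻¹ • ∑ i, f i x)
    (fS : Finset (Fin n) → EuclideanSpace ℝ (Fin d) → ℝ)
    (hfS : ∀ S, fS S = fun x => ((S.card : ℝ))⁻¹ • ∑ i ∈ S, f i x)
    (hhess : ∀ S : Finset (Fin n), S.Nonempty → ∀ x v : EuclideanSpace ℝ (Fin d),
      lam * ‖v‖ ^ 2 ≤ fderiv ℝ (fun y => fderiv ℝ (fS S) y v) x v ∧
      fderiv ℝ (fun y => fderiv ℝ (fS S) y v) x v ≤ Lam * ‖v‖ ^ 2)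
    (wstar : EuclideanSpace ℝ (Fin d)) (hmin : ∀ x, fbar wstar ≤ fbar x)
    (s : ℕ) (hs : 0 < s) (hsn : s ≤ n)
    (x w : EuclideanSpace ℝ (Fin d)) :
    (((Finset.univ.filter fun S : Finset (Fin n) => S.card = s).card : ℝ))⁻¹ *
      ∑ S ∈ Finset.univ.filter (fun S : Finset (Fin n) => S.card = s),
        ‖gradient (fS S) x - gradient (fS S) w + gradient fbar w‖ ^ 2
    ≤ 4 * Lam * (fbar x - fbar wstar) + 4 * (Lam - lam) * (fbar w - fbar wstar) := by
  set F := univ.filter fun S : Finset (Fin n) => S.card = s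
  have hFeq : F = univ.powersetCard s := by rw [powersetCard_eq_filter, powerset_univ]
  have hsn' : s ≤ #(univ : Finset (Fin n)) := by rwa [card_univ, Fintype.card_fin]
  have hF : F.Nonempty := hFeq ▸ powersetCard_nonempty.2 hsn'
  have hmean : ∀ y, ∑ S ∈ F, fS S y = #F * fbar y := fun y => by
    simpa [hfS, hfbar, ← hFeq] using sum_powersetCard_inv_card_smul_sum univ hs hsn' (f · y)
  have hcontDiff : ∀ S, ContDiff ℝ 2 (fS S) := fun S => by
    rw [hfS]
    exact (ContDiff.sum fun i _ => hdiff i).const_smul _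
  rw [inv_mul_le_iff₀ (by exact_mod_cast hF.card_pos)]
  exact sum_norm_sq_svrg_le hF (fun S _ => hcontDiff S) hmean hlam.le hll
    (fun S hS => hhess S (card_pos.1 ((mem_filter.1 hS).2 ▸ hs))) hmin x w
end

section
/- Let G be symmetric positive definite with λI ⪯ G ⪯ ΛI, D of full column rank q, Y = GD and Δ = (DᵀY)⁻¹. Then ‖DΔDᵀ‖₂ ≤ 1/λ, ‖YΔYᵀ‖₂ ≤ Λ, and ‖YΔDᵀ‖₂ ≤ √(Λ/λ). -/
open Matrix

/-- The spectral (operator 2-) norm of a square real matrix. -/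
noncomputable def specNorm {d : ℕ} (A : Matrix (Fin d) (Fin d) ℝ) : ℝ :=
  ‖Matrix.toEuclideanCLM (𝕜 := ℝ) A‖

/-!
Write `G = SᵀS` with `S = G^{1/2}` symmetric and put `E = SD`. Then `DᵀY = EᵀE`, and the three
matrices are `S⁻¹PS⁻¹`, `SPS` and `SPS⁻¹` for `P = E(EᵀE)⁻¹Eᵀ`, a self-adjoint idempotent, so
`‖P‖₂ ≤ 1`. The bounds `λ ≤ SᵀS ≤ Λ` on the quadratic form give `‖S‖₂ ≤ √Λ` and
`‖S⁻¹‖₂ ≤ 1/√λ`, and submultiplicativity finishes.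
-/

namespace Matrix

section Quadratic

variable {m n : Type*} [Fintype m] [Fintype n]

theorem dotProduct_transpose_mul_self_mulVec (A : Matrix m n ℝ) (x : n → ℝ) :
    x ⬝ᵥ (Aᵀ * A) *ᵥ x = A *ᵥ x ⬝ᵥ A *ᵥ x := by
  rw [← mulVec_mulVec, dotProduct_mulVec, vecMul_transpose]

theorem dotProduct_mulVec_le_of_posSemidef_smul_one_sub [DecidableEq n] {M : Matrix n n ℝ}
    {c : ℝ} (h : (c • 1 - M).PosSemidef) (x : n → ℝ) : x ⬝ᵥ M *ᵥ x ≤ c * (x ⬝ᵥ x) := by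
  simpa only [star_trivial, sub_mulVec, smul_mulVec, one_mulVec, dotProduct_sub,
    dotProduct_smul, smul_eq_mul, sub_nonneg] using h.dotProduct_mulVec_nonneg x

theorem le_dotProduct_mulVec_of_posSemidef_sub_smul_one [DecidableEq n] {M : Matrix n n ℝ}
    {c : ℝ} (h : (M - c • 1).PosSemidef) (x : n → ℝ) : c * (x ⬝ᵥ x) ≤ x ⬝ᵥ M *ᵥ x := by
  simpa only [star_trivial, sub_mulVec, smul_mulVec, one_mulVec, dotProduct_sub,
    dotProduct_smul, smul_eq_mul, sub_nonneg] using h.dotProduct_mulVec_nonneg x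

theorem isUnit_det_of_posSemidef_transpose_mul_self_sub [DecidableEq n] {A : Matrix n n ℝ}
    {c : ℝ} (hc : 0 < c) (h : (Aᵀ * A - c • 1).PosSemidef) : IsUnit A.det := by
  rw [← isUnit_iff_isUnit_det, ← mulVec_injective_iff_isUnit]
  intro x y hxy
  have hker : A *ᵥ (x - y) = 0 := by rw [mulVec_sub, hxy, sub_self]
  have hle := le_dotProduct_mulVec_of_posSemidef_sub_smul_one h (x - y)
  rw [dotProduct_transpose_mul_self_mulVec, hker, zero_dotProduct] at hle
  have hzero : (x - y) ⬝ᵥ (x - y) = 0 := le_antisymm (nonpos_of_mul_nonpos_right hle hc)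
    (by simpa only [star_trivial] using dotProduct_star_self_nonneg (x - y))
  exact sub_eq_zero.mp (dotProduct_self_eq_zero.mp hzero)

open scoped MatrixOrder in
theorem PosSemidef.exists_transpose_eq_and_transpose_mul_self_eq [DecidableEq n]
    {G : Matrix n n ℝ} (hG : G.PosSemidef) : ∃ S : Matrix n n ℝ, Sᵀ = S ∧ Sᵀ * S = G := by
  have hS : (CFC.sqrt G)ᵀ = CFC.sqrt G := by
    simpa [IsHermitian] using (CFC.sqrt_nonneg G).posSemidef.isHermitian
  exact ⟨CFC.sqrt G, hS, by rw [hS, CFC.sqrt_mul_sqrt_self G hG.nonneg]⟩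

end Quadratic

section Projection

variable {m n K : Type*} [Fintype m] [Fintype n] [DecidableEq n] [Field K] [StarRing K]

theorem isStarProjection_mul_inv_mul_conjTranspose (E : Matrix m n K) :
    IsStarProjection (E * (Eᴴ * E)⁻¹ * Eᴴ) where
  isIdempotentElem := by
    have hinv : (Eᴴ * E)⁻¹ * (Eᴴ * E) * (Eᴴ * E)⁻¹ = (Eᴴ * E)⁻¹ := by
      by_cases h : IsUnit (Eᴴ * E).det
      · rw [nonsing_inv_mul _ h, one_mul]
      · simp [nonsing_inv_apply_not_isUnit _ h]
    rw [IsIdempotentElem]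
    conv_rhs => rw [← hinv]
    simp only [Matrix.mul_assoc]
  isSelfAdjoint := by
    simp [IsSelfAdjoint, star_eq_conjTranspose, conjTranspose_nonsing_inv, Matrix.mul_assoc]

end Projection

end Matrix

section SpecNorm

variable {d : ℕ}

theorem specNorm_nonneg (A : Matrix (Fin d) (Fin d) ℝ) : 0 ≤ specNorm A := norm_nonneg _

theorem specNorm_mul_le (A B : Matrix (Fin d) (Fin d) ℝ) :
    specNorm (A * B) ≤ specNorm A * specNorm B := by
  simpa only [specNorm, map_mul] using norm_mul_le _ _

theorem specNorm_le_one_of_isStarProjection {P : Matrix (Fin d) (Fin d) ℝ}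
    (hP : IsStarProjection P) : specNorm P ≤ 1 :=
  (hP.map (toEuclideanCLM (𝕜 := ℝ))).norm_le

theorem specNorm_le_sqrt_of_forall_dotProduct_le {A : Matrix (Fin d) (Fin d) ℝ} {c : ℝ}
    (hc : 0 ≤ c) (h : ∀ x, A *ᵥ x ⬝ᵥ A *ᵥ x ≤ c * (x ⬝ᵥ x)) : specNorm A ≤ √c := by
  refine ContinuousLinearMap.opNorm_le_bound _ (Real.sqrt_nonneg c) fun x => ?_
  rw [← Real.sqrt_sq (norm_nonneg _), ← Real.sqrt_sq (norm_nonneg x), ← Real.sqrt_mul hc]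
  apply Real.sqrt_le_sqrt
  rw [EuclideanSpace.real_norm_sq_eq, EuclideanSpace.real_norm_sq_eq, ofLp_toEuclideanCLM]
  simpa only [dotProduct, sq] using h x.ofLp

theorem specNorm_le_sqrt_of_posSemidef_smul_one_sub {A : Matrix (Fin d) (Fin d) ℝ} {c : ℝ}
    (hc : 0 ≤ c) (h : (c • 1 - Aᵀ * A).PosSemidef) : specNorm A ≤ √c :=
  specNorm_le_sqrt_of_forall_dotProduct_le hc fun x => by
    simpa only [dotProduct_transpose_mul_self_mulVec] using
      dotProduct_mulVec_le_of_posSemidef_smul_one_sub h x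

theorem specNorm_inv_le_sqrt_inv_of_posSemidef_sub_smul_one {A : Matrix (Fin d) (Fin d) ℝ}
    {c : ℝ} (hc : 0 < c) (h : (Aᵀ * A - c • 1).PosSemidef) : specNorm A⁻¹ ≤ √c⁻¹ := by
  refine specNorm_le_sqrt_of_forall_dotProduct_le (inv_nonneg.mpr hc.le) fun y => ?_
  have hA := isUnit_det_of_posSemidef_transpose_mul_self_sub hc h
  have hle := le_dotProduct_mulVec_of_posSemidef_sub_smul_one h (A⁻¹ *ᵥ y)
  rw [dotProduct_transpose_mul_self_mulVec, mulVec_mulVec, mul_nonsing_inv _ hA,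
    one_mulVec] at hle
  exact (le_inv_mul_iff₀ hc).mpr hle

theorem specNorm_mul_mul_inv_mul_le {q : ℕ} {M N : Matrix (Fin d) (Fin d) ℝ}
    (E : Matrix (Fin d) (Fin q) ℝ) {a b : ℝ} (hM : specNorm M ≤ a) (hN : specNorm N ≤ b) :
    specNorm (M * E * (Eᵀ * E)⁻¹ * (Eᵀ * N)) ≤ a * b := by
  have hP : specNorm (E * (Eᵀ * E)⁻¹ * Eᵀ) ≤ 1 := by
    simpa only [conjTranspose_eq_transpose_of_trivial] using
      specNorm_le_one_of_isStarProjection (isStarProjection_mul_inv_mul_conjTranspose E)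
  calc specNorm (M * E * (Eᵀ * E)⁻¹ * (Eᵀ * N))
      = specNorm (M * (E * (Eᵀ * E)⁻¹ * Eᵀ) * N) := by simp only [Matrix.mul_assoc]
    _ ≤ specNorm M * specNorm (E * (Eᵀ * E)⁻¹ * Eᵀ) * specNorm N :=
      (specNorm_mul_le _ _).trans
        (mul_le_mul_of_nonneg_right (specNorm_mul_le _ _) (specNorm_nonneg _))
    _ ≤ a * 1 * b := by
      gcongr <;> simp only [mul_one, specNorm_nonneg, (specNorm_nonneg M).trans hM]
    _ = a * b := by rw [mul_one]

end SpecNorm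

theorem sketch_norm_bounds_general {d q : ℕ} (lam Lam : ℝ) (hlam : 0 < lam) (hll : lam ≤ Lam)
    (G : Matrix (Fin d) (Fin d) ℝ)
    (hlo : (G - lam • (1 : Matrix (Fin d) (Fin d) ℝ)).PosSemidef)
    (hhi : ((Lam • (1 : Matrix (Fin d) (Fin d) ℝ)) - G).PosSemidef)
    (D : Matrix (Fin d) (Fin q) ℝ) :
    let Y := G * D
    let Δ := (Dᵀ * Y)⁻¹
    specNorm (D * Δ * Dᵀ) ≤ 1 / lam ∧
    specNorm (Y * Δ * Yᵀ) ≤ Lam ∧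
    specNorm (Y * Δ * Dᵀ) ≤ Real.sqrt (Lam / lam) := by
  intro Y Δ
  obtain ⟨S, hSt, rfl⟩ := PosSemidef.exists_transpose_eq_and_transpose_mul_self_eq
    (by simpa using hlo.add (PosSemidef.one.smul hlam.le))
  have hSu := isUnit_det_of_posSemidef_transpose_mul_self_sub hlam hlo
  have hLam : 0 ≤ Lam := hlam.le.trans hll
  have hS := specNorm_le_sqrt_of_posSemidef_smul_one_sub hLam hhi
  have hSinv := specNorm_inv_le_sqrt_inv_of_posSemidef_sub_smul_one hlam hlo
  set E := S * D
  have hD : D = S⁻¹ * E := (nonsing_inv_mul_cancel_left _ _ hSu).symm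
  have hDt : Dᵀ = Eᵀ * S⁻¹ := by rw [hD, transpose_mul, transpose_nonsing_inv, hSt]
  have hY : Y = S * E := by
    show Sᵀ * S * D = S * (S * D)
    rw [hSt, Matrix.mul_assoc]
  have hYt : Yᵀ = Eᵀ * S := by rw [hY, transpose_mul, hSt]
  have hΔ : Δ = (Eᵀ * E)⁻¹ := by
    show (Dᵀ * Y)⁻¹ = _
    rw [hDt, hY, Matrix.mul_assoc, nonsing_inv_mul_cancel_left _ _ hSu]
  refine ⟨?_, ?_, ?_⟩
  · rw [hΔ, hDt, hD]
    refine (specNorm_mul_mul_inv_mul_le E hSinv hSinv).trans_eq ?_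
    rw [Real.mul_self_sqrt (by positivity), one_div]
  · rw [hΔ, hYt, hY]
    refine (specNorm_mul_mul_inv_mul_le E hS hS).trans_eq ?_
    rw [Real.mul_self_sqrt hLam]
  · rw [hΔ, hDt, hY]
    refine (specNorm_mul_mul_inv_mul_le E hS hSinv).trans_eq ?_
    rw [← Real.sqrt_mul hLam, div_eq_mul_inv]

/-- If `λI ⪯ G ⪯ ΛI` with `G` symmetric, `D` of full column rank, `Y = GD`,
`Δ = (DᵀY)⁻¹`, then `‖DΔDᵀ‖₂ ≤ 1/λ`, `‖YΔYᵀ‖₂ ≤ Λ` and `‖YΔDᵀ‖₂ ≤ √(Λ/λ)`. -/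
theorem sketch_norm_bounds {d q : ℕ} (lam Lam : ℝ) (hlam : 0 < lam) (hll : lam ≤ Lam)
    (G : Matrix (Fin d) (Fin d) ℝ) (hGsym : G.IsSymm)
    (hlo : (G - lam • (1 : Matrix (Fin d) (Fin d) ℝ)).PosSemidef)
    (hhi : ((Lam • (1 : Matrix (Fin d) (Fin d) ℝ)) - G).PosSemidef)
    (D : Matrix (Fin d) (Fin q) ℝ) (hD : D.rank = q) :
    let Y := G * D
    let Δ := (Dᵀ * Y)⁻¹
    specNorm (D * Δ * Dᵀ) ≤ 1 / lam ∧
    specNorm (Y * Δ * Yᵀ) ≤ Lam ∧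
    specNorm (Y * Δ * Dᵀ) ≤ Real.sqrt (Lam / lam) :=
  sketch_norm_bounds_general lam Lam hlam hll G hlo hhi D
end

section
/- Let H be symmetric positive definite, G symmetric positive definite, D of full column rank, Y = GD, Δ = (DᵀY)⁻¹. Then the block BFGS update H⁺ = DΔDᵀ + (I − DΔYᵀ)H(I − YΔDᵀ) is symmetric positive definite. -/
/-!
Write `H⁺ = DΔDᴴ + BHBᴴ` with `B = 1 - DΔYᴴ`. Both terms are positive semidefinite, and if the
quadratic form of `H⁺` vanishes at `x` then `Dᴴx = 0` and `Bᴴx = 0`; but `Bᴴx = x - YΔ(Dᴴx) = x`,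
so `x = 0`. No relation between `Y` and `Δ` is needed beyond `Δ` being positive definite, which
`Δ = (DᵀGD)⁻¹` is because `G` is positive definite and `D` is injective.
-/

open Matrix

namespace Matrix

variable {k m n : Type*} [Fintype n]

theorem mulVec_injective_of_rank_eq_card {K : Type*} [Field K] {A : Matrix m n K}
    (hA : A.rank = Fintype.card n) : Function.Injective A.mulVec := by
  rw [mulVec_injective_iff, linearIndependent_iff_card_eq_finrank_span, ← hA,
    rank_eq_finrank_span_cols, Set.finrank]

variable {R : Type*} [CommRing R] [PartialOrder R] [StarRing R] [Fintype k] [Fintype m]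

theorem PosDef.dotProduct_mul_mul_conjTranspose_mulVec_pos {A : Matrix n n R} (hA : A.PosDef)
    (P : Matrix k n R) {x : k → R} (hx : Pᴴ *ᵥ x ≠ 0) :
    0 < star x ⬝ᵥ (P * A * Pᴴ) *ᵥ x := by
  simpa only [star_mulVec, conjTranspose_conjTranspose, dotProduct_mulVec, vecMul_vecMul,
    ← mulVec_mulVec, Matrix.mul_assoc] using hA.dotProduct_mulVec_pos hx

variable [AddLeftMono R]

theorem PosDef.mul_mul_conjTranspose_add {A : Matrix m m R} {B : Matrix n n R}
    (hA : A.PosDef) (hB : B.PosDef) (P : Matrix k m R) (Q : Matrix k n R)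
    (hPQ : ∀ x, Pᴴ *ᵥ x = 0 → Qᴴ *ᵥ x = 0 → x = 0) :
    (P * A * Pᴴ + Q * B * Qᴴ).PosDef := by
  have hPAP := hA.posSemidef.mul_mul_conjTranspose_same P
  have hQBQ := hB.posSemidef.mul_mul_conjTranspose_same Q
  refine .of_dotProduct_mulVec_pos (hPAP.isHermitian.add hQBQ.isHermitian) fun x hx => ?_
  rw [add_mulVec, dotProduct_add]
  by_cases hPx : Pᴴ *ᵥ x = 0
  · have hQx : Qᴴ *ᵥ x ≠ 0 := fun hQx => hx (hPQ x hPx hQx)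
    exact add_pos_of_nonneg_of_pos (hPAP.dotProduct_mulVec_nonneg x)
      (hB.dotProduct_mul_mul_conjTranspose_mulVec_pos Q hQx)
  · exact add_pos_of_pos_of_nonneg (hA.dotProduct_mul_mul_conjTranspose_mulVec_pos P hPx)
      (hQBQ.dotProduct_mulVec_nonneg x)

def blockBFGSUpdate [DecidableEq m] (H : Matrix m m R) (D Y : Matrix m n R) (Δ : Matrix n n R) :
    Matrix m m R :=
  D * Δ * Dᴴ + (1 - D * Δ * Yᴴ) * H * (1 - Y * Δ * Dᴴ)

theorem PosDef.blockBFGSUpdate [DecidableEq m] {H : Matrix m m R} {Δ : Matrix n n R}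
    (hH : H.PosDef) (hΔ : Δ.PosDef) (D Y : Matrix m n R) :
    (blockBFGSUpdate H D Y Δ).PosDef := by
  have hB : (1 - D * Δ * Yᴴ)ᴴ = 1 - Y * Δ * Dᴴ := by
    simp only [conjTranspose_sub, conjTranspose_one, conjTranspose_mul, conjTranspose_conjTranspose,
      hΔ.isHermitian.eq, Matrix.mul_assoc]
  rw [Matrix.blockBFGSUpdate, ← hB]
  refine hΔ.mul_mul_conjTranspose_add hH D _ fun x hDx hBx => ?_
  rwa [hB, sub_mulVec, one_mulVec, ← mulVec_mulVec, hDx, mulVec_zero, sub_zero] at hBx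

end Matrix

/-- The block BFGS update `H⁺ = DΔDᵀ + (I − DΔYᵀ)H(I − YΔDᵀ)` of a symmetric positive
definite `H`, with `G` symmetric positive definite, `D` full column rank, `Y = GD`,
`Δ = (DᵀY)⁻¹`, is symmetric positive definite. -/
theorem block_bfgs_posdef {d q : ℕ}
    (H G : Matrix (Fin d) (Fin d) ℝ) (hH : H.PosDef) (hG : G.PosDef)
    (D : Matrix (Fin d) (Fin q) ℝ) (hD : D.rank = q) :
    let Y := G * D
    let Δ := (Dᵀ * Y)⁻¹
    (D * Δ * Dᵀ + (1 - D * Δ * Yᵀ) * H * (1 - Y * Δ * Dᵀ)).PosDef := by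
  intro Y Δ
  have hDinj : Function.Injective D.mulVec :=
    mulVec_injective_of_rank_eq_card (by rwa [Fintype.card_fin])
  have hΔ : Δ.PosDef := by
    simpa only [conjTranspose_eq_transpose_of_trivial, Matrix.mul_assoc]
      using (hG.conjTranspose_mul_mul_same hDinj).inv
  simpa only [blockBFGSUpdate, conjTranspose_eq_transpose_of_trivial]
    using hH.blockBFGSUpdate hΔ D Y
end

section
/- The inverse of the block BFGS update H⁺ = DΔDᵀ + (I − DΔYᵀ)H(I − YΔDᵀ) is given by B⁺ = B + YΔYᵀ − BD(DᵀBD)⁻¹DᵀB, where B = H⁻¹. -/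
/-!
With `S = (DᵀBD)⁻¹` the identity is purely algebraic. It follows from
`ΔDᵀY = DᵀYΔ = ΔYᵀD = I`, `HB = I` and `DᵀBDS = I`, since these give
`(I − YΔDᵀ)B⁺ = B − BDSDᵀB`, `(I − DΔYᵀ)H(B − BDSDᵀB) = I − DΔYᵀ` and `DΔDᵀB⁺ = DΔYᵀ`.
-/

open Matrix

theorem Matrix.blockBFGS_mul_eq_one {R m n : Type*} [Ring R] [Fintype m] [Fintype n]
    [DecidableEq m] [DecidableEq n] {H B : Matrix m m R} {D Y : Matrix m n R}
    {Δ S : Matrix n n R} (hΔ : Δ * Dᵀ * Y = 1) (hΔ' : Dᵀ * Y * Δ = 1)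
    (hΔt : Δ * Yᵀ * D = 1) (hHB : H * B = 1) (hS : Dᵀ * B * D * S = 1) :
    (D * Δ * Dᵀ + (1 - D * Δ * Yᵀ) * H * (1 - Y * Δ * Dᵀ)) *
      (B + Y * Δ * Yᵀ - B * D * S * Dᵀ * B) = 1 := by
  have cancel_Δ (X : Matrix n m R) : Δ * (Dᵀ * (Y * X)) = X := by
    simp only [← Matrix.mul_assoc, hΔ, Matrix.one_mul]
  have cancel_Δ' (X : Matrix n m R) : Dᵀ * (Y * (Δ * X)) = X := by
    simp only [← Matrix.mul_assoc, hΔ', Matrix.one_mul]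
  have cancel_Δt (X : Matrix n m R) : Δ * (Yᵀ * (D * X)) = X := by
    simp only [← Matrix.mul_assoc, hΔt, Matrix.one_mul]
  have cancel_S (X : Matrix n m R) : Dᵀ * (B * (D * (S * X))) = X := by
    simp only [← Matrix.mul_assoc, hS, Matrix.one_mul]
  have hright : (1 - Y * Δ * Dᵀ) * (B + Y * Δ * Yᵀ - B * D * S * Dᵀ * B) =
      B - B * D * S * Dᵀ * B := by
    simp only [Matrix.sub_mul, Matrix.mul_add, Matrix.mul_sub, Matrix.one_mul, Matrix.mul_assoc,
      cancel_Δ, cancel_S]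
    abel
  have hmiddle : (1 - D * Δ * Yᵀ) * H * (B - B * D * S * Dᵀ * B) = 1 - D * Δ * Yᵀ := by
    simp only [Matrix.sub_mul, Matrix.mul_sub, Matrix.one_mul, Matrix.mul_one, Matrix.mul_assoc,
      ← Matrix.mul_assoc H B, hHB, cancel_Δt]
    abel
  have hleft : D * Δ * Dᵀ * (B + Y * Δ * Yᵀ - B * D * S * Dᵀ * B) = D * Δ * Yᵀ := by
    simp only [Matrix.mul_add, Matrix.mul_sub, Matrix.mul_assoc, cancel_Δ', cancel_S]
    abel
  rw [Matrix.add_mul, hleft, Matrix.mul_assoc ((1 - D * Δ * Yᵀ) * H), hright, hmiddle]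
  abel

theorem Matrix.mulVec_injective_of_rank_eq_card_s7 {K m n : Type*} [Field K] [Fintype n]
    (A : Matrix m n K) (hA : A.rank = Fintype.card n) : Function.Injective A.mulVec :=
  mulVec_injective_iff.mpr <| linearIndependent_iff_card_eq_finrank_span.mpr <| by
    rw [← hA, rank_eq_finrank_span_cols, Set.finrank]

theorem Matrix.PosDef.transpose_mul_mul_same {R m n : Type*} [Ring R] [PartialOrder R]
    [StarRing R] [TrivialStar R] [Fintype m] [Fintype n] {M : Matrix m m R} (hM : M.PosDef)
    {D : Matrix m n R} (hD : Function.Injective D.mulVec) : (Dᵀ * M * D).PosDef := by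
  simpa using hM.conjTranspose_mul_mul_same hD

/-- The inverse of the block BFGS update `H⁺ = DΔDᵀ + (I − DΔYᵀ)H(I − YΔDᵀ)` is
`B⁺ = B + YΔYᵀ − BD(DᵀBD)⁻¹DᵀB` with `B = H⁻¹`; i.e. `H⁺ B⁺ = I`. -/
theorem block_bfgs_inverse_formula {d q : ℕ}
    (H G : Matrix (Fin d) (Fin d) ℝ) (hH : H.PosDef) (hG : G.PosDef)
    (D : Matrix (Fin d) (Fin q) ℝ) (hD : D.rank = q) :
    let Y := G * D
    let Δ := (Dᵀ * Y)⁻¹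
    let B := H⁻¹
    (D * Δ * Dᵀ + (1 - D * Δ * Yᵀ) * H * (1 - Y * Δ * Dᵀ)) *
      (B + Y * Δ * Yᵀ - B * D * (Dᵀ * B * D)⁻¹ * Dᵀ * B) = 1 := by
  intro Y Δ B
  have hDinj : Function.Injective D.mulVec :=
    D.mulVec_injective_of_rank_eq_card_s7 (by rwa [Fintype.card_fin])
  have hDY : IsUnit (Dᵀ * Y).det := by
    rw [← Matrix.mul_assoc]
    exact (hG.transpose_mul_mul_same hDinj).det_pos.ne'.isUnit
  have hYD : Yᵀ * D = Dᵀ * Y := by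
    rw [transpose_mul, Matrix.mul_assoc, show Gᵀ = G by simpa using hG.isHermitian.eq]
  have hΔ : Δ * (Dᵀ * Y) = 1 := nonsing_inv_mul _ hDY
  refine blockBFGS_mul_eq_one ?_ ?_ ?_ (mul_nonsing_inv H hH.det_pos.ne'.isUnit)
    (mul_nonsing_inv _ (hH.inv.transpose_mul_mul_same hDinj).det_pos.ne'.isUnit)
  · rw [Matrix.mul_assoc, hΔ]
  · exact mul_nonsing_inv _ hDY
  · rw [Matrix.mul_assoc, hYD, hΔ]
end

section
/- Under λI ⪯ G ⪯ ΛI, the inverse of the block BFGS update satisfies ‖B⁺‖₂ ≤ ‖B‖₂ + Λ, where B⁺ = B + YΔYᵀ − BD(DᵀBD)⁻¹DᵀB, Y = GD, Δ = (DᵀGD)⁻¹. -/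
/-!
Write `P_A = A D (Dᵀ A D)⁻¹ Dᵀ A`. Then `B⁺ = (B - P_B) + P_G`, and for positive semidefinite `A`
one has `0 ⪯ P_A ⪯ A`, since `A - P_A = (1 - D Δ Dᵀ A)ᵀ A (1 - D Δ Dᵀ A)` with `Δ = (Dᵀ A D)⁻¹`.
So `0 ⪯ B - P_B ⪯ B` and `0 ⪯ P_G ⪯ G ⪯ Λ`. On positive operators the norm is the supremum of
the Rayleigh quotient, hence monotone in the Loewner order, and the triangle inequality concludes.
-/

open Matrix
open scoped ComplexOrder

namespace ContinuousLinearMap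

variable {𝕜 E : Type*} [RCLike 𝕜] [NormedAddCommGroup E] [InnerProductSpace 𝕜 E]

theorem IsPositive.rayleighQuotient_nonneg {T : E →L[𝕜] E} (hT : T.IsPositive) (x : E) :
    0 ≤ T.rayleighQuotient x :=
  div_nonneg (hT.re_inner_nonneg_left x) (sq_nonneg _)

theorem IsPositive.norm_le_norm_of_isPositive_sub {T S : E →L[𝕜] E} (hT : T.IsPositive)
    (hST : (S - T).IsPositive) : ‖T‖ ≤ ‖S‖ := by
  rw [T.norm_eq_iSup_rayleighQuotient hT.isSymmetric]
  refine ciSup_le fun x => ?_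
  calc |T.rayleighQuotient x| = T.rayleighQuotient x :=
        abs_of_nonneg (hT.rayleighQuotient_nonneg x)
    _ ≤ T.rayleighQuotient x + (S - T).rayleighQuotient x :=
      le_add_of_nonneg_right (hST.rayleighQuotient_nonneg x)
    _ = S.rayleighQuotient x := by rw [← rayleighQuotient_add, add_sub_cancel]
    _ ≤ ‖S‖ := (le_abs_self _).trans (S.rayleighQuotient_le_norm x)

end ContinuousLinearMap

namespace Matrix

variable {n m 𝕜 : Type*} [Fintype n] [Fintype m] [DecidableEq m] [RCLike 𝕜]

theorem PosSemidef.isPositive_toEuclideanCLM [DecidableEq n] {A : Matrix n n 𝕜}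
    (hA : A.PosSemidef) : (toEuclideanCLM (n := n) (𝕜 := 𝕜) A).IsPositive := by
  rw [← ContinuousLinearMap.isPositive_toLinearMap_iff, coe_toEuclideanCLM_eq_toEuclideanLin]
  exact isPositive_toEuclideanLin_iff.mpr hA

theorem PosSemidef.mul_mul_inv_mul_mul {A : Matrix n n 𝕜} (hA : A.PosSemidef)
    (D : Matrix n m 𝕜) : (A * D * (Dᴴ * A * D)⁻¹ * Dᴴ * A).PosSemidef := by
  have h := (hA.conjTranspose_mul_mul_same D).inv.conjTranspose_mul_mul_same (Dᴴ * A)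
  rw [conjTranspose_mul, conjTranspose_conjTranspose, hA.isHermitian.eq] at h
  simpa only [Matrix.mul_assoc] using h

theorem PosSemidef.sub_mul_mul_inv_mul_mul [DecidableEq n] {A : Matrix n n 𝕜}
    (hA : A.PosSemidef) (D : Matrix n m 𝕜) : (A - A * D * (Dᴴ * A * D)⁻¹ * Dᴴ * A).PosSemidef := by
  set Δ := (Dᴴ * A * D)⁻¹
  -- `Δ (Dᴴ A D) Δ = Δ` also holds for the junk inverse `Δ = 0` of a singular `Dᴴ A D`.
  have hΔ : ∀ X : Matrix m n 𝕜, Δ * (Dᴴ * (A * (D * (Δ * X)))) = Δ * X := by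
    intro X
    rcases (Dᴴ * A * D).nonsing_inv_cancel_or_zero with ⟨h, -⟩ | h
    · rw [← Matrix.mul_assoc Dᴴ, ← Matrix.mul_assoc (Dᴴ * A), ← Matrix.mul_assoc, h,
        Matrix.one_mul]
    · simp [Δ, h]
  have hΔh : Δᴴ = Δ := (hA.conjTranspose_mul_mul_same D).inv.isHermitian.eq
  have h := hA.conjTranspose_mul_mul_same (1 - D * Δ * Dᴴ * A)
  convert h using 1
  simp only [conjTranspose_sub, conjTranspose_one, conjTranspose_mul, conjTranspose_conjTranspose,
    hA.isHermitian.eq, hΔh, Matrix.mul_sub, Matrix.sub_mul, Matrix.mul_one, Matrix.one_mul,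
    Matrix.mul_assoc, hΔ]
  abel

end Matrix

section specNorm

variable {d : ℕ}

theorem specNorm_add_le (A C : Matrix (Fin d) (Fin d) ℝ) :
    specNorm (A + C) ≤ specNorm A + specNorm C := by
  simpa only [specNorm, map_add] using norm_add_le _ _

theorem specNorm_le_specNorm {A C : Matrix (Fin d) (Fin d) ℝ} (hA : A.PosSemidef)
    (hCA : (C - A).PosSemidef) : specNorm A ≤ specNorm C := by
  refine hA.isPositive_toEuclideanCLM.norm_le_norm_of_isPositive_sub ?_
  simpa only [map_sub] using hCA.isPositive_toEuclideanCLM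

theorem specNorm_smul_one_le {c : ℝ} (hc : 0 ≤ c) :
    specNorm (c • (1 : Matrix (Fin d) (Fin d) ℝ)) ≤ c := by
  rw [specNorm, map_smul, map_one, norm_smul, Real.norm_of_nonneg hc]
  exact mul_le_of_le_one_right hc ContinuousLinearMap.norm_id_le

end specNorm

theorem block_bfgs_inverse_norm_bound_general {d q : ℕ} (lam Lam : ℝ) (hlam : 0 < lam)
    (hll : lam ≤ Lam)
    (B : Matrix (Fin d) (Fin d) ℝ) (hB : B.PosDef)
    (G : Matrix (Fin d) (Fin d) ℝ)
    (hlo : (G - lam • (1 : Matrix (Fin d) (Fin d) ℝ)).PosSemidef)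
    (hhi : ((Lam • (1 : Matrix (Fin d) (Fin d) ℝ)) - G).PosSemidef)
    (D : Matrix (Fin d) (Fin q) ℝ) :
    let Y := G * D
    let Δ := (Dᵀ * G * D)⁻¹
    specNorm (B + Y * Δ * Yᵀ - B * D * (Dᵀ * B * D)⁻¹ * Dᵀ * B) ≤ specNorm B + Lam := by
  intro Y Δ
  have hG : G.PosSemidef := by
    simpa using hlo.add (PosSemidef.one.smul hlam.le)
  have hGt : Gᵀ = G := by rw [← conjTranspose_eq_transpose_of_trivial, hG.isHermitian.eq]
  have hPB := hB.posSemidef.mul_mul_inv_mul_mul D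
  have hSB := hB.posSemidef.sub_mul_mul_inv_mul_mul D
  have hPG := hG.mul_mul_inv_mul_mul D
  have hSG := hG.sub_mul_mul_inv_mul_mul D
  simp only [conjTranspose_eq_transpose_of_trivial] at hPB hSB hPG hSG
  have hBpart := specNorm_le_specNorm hSB (by rwa [sub_sub_cancel])
  have hGpart := specNorm_le_specNorm (C := Lam • 1) hPG
    (by simpa only [sub_add_sub_cancel] using hhi.add hSG)
  have hsplit : B + Y * Δ * Yᵀ - B * D * (Dᵀ * B * D)⁻¹ * Dᵀ * B =
      (B - B * D * (Dᵀ * B * D)⁻¹ * Dᵀ * B) + G * D * (Dᵀ * G * D)⁻¹ * Dᵀ * G := by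
    simp only [Y, Δ, transpose_mul, hGt, Matrix.mul_assoc]
    abel
  rw [hsplit]
  calc _ ≤ _ := specNorm_add_le _ _
    _ ≤ specNorm B + specNorm (Lam • 1) := add_le_add hBpart hGpart
    _ ≤ specNorm B + Lam := by grw [specNorm_smul_one_le (hlam.le.trans hll)]

/-- Under `λI ⪯ G ⪯ ΛI`, the inverse of the block BFGS update satisfies
`‖B⁺‖₂ ≤ ‖B‖₂ + Λ`, where `B⁺ = B + YΔYᵀ − BD(DᵀBD)⁻¹DᵀB`, `Y = GD`, `Δ = (DᵀGD)⁻¹`. -/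
theorem block_bfgs_inverse_norm_bound {d q : ℕ} (lam Lam : ℝ) (hlam : 0 < lam)
    (hll : lam ≤ Lam)
    (B : Matrix (Fin d) (Fin d) ℝ) (hB : B.PosDef)
    (G : Matrix (Fin d) (Fin d) ℝ) (hGsym : G.IsSymm)
    (hlo : (G - lam • (1 : Matrix (Fin d) (Fin d) ℝ)).PosSemidef)
    (hhi : ((Lam • (1 : Matrix (Fin d) (Fin d) ℝ)) - G).PosSemidef)
    (D : Matrix (Fin d) (Fin q) ℝ) (hD : D.rank = q) :
    let Y := G * D
    let Δ := (Dᵀ * G * D)⁻¹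
    specNorm (B + Y * Δ * Yᵀ - B * D * (Dᵀ * B * D)⁻¹ * Dᵀ * B) ≤ specNorm B + Lam :=
  block_bfgs_inverse_norm_bound_general lam Lam hlam hll B hB G hlo hhi D
end

section
/- If H₀ = 0 is used in place of a positive definite matrix in the block BFGS formula, the result is H⁺ = D(DᵀGD)⁻¹Dᵀ, which satisfies H⁺GH⁺ = H⁺ (i.e., H⁺G is a projection) and is positive semidefinite with rank q. -/
open Matrix

/-!
Write `S = DᵀGD` and `H = D S⁻¹ Dᵀ`. Since `D` has full column rank and `G` is positive definite,
`S` is positive definite, hence invertible, and `H (G D) = D S⁻¹ S = D`. This reproducing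
identity gives `H G H = (H G D) S⁻¹ Dᵀ = H`, and, together with `H = D (S⁻¹ Dᵀ)`, shows that `H`
and `D` have the same column space, so `rank H = rank D = q`. Positive semidefiniteness is the
congruence `D S⁻¹ Dᵀ` of the positive definite `S⁻¹`.
-/

namespace Matrix

theorem mulVec_injective_iff_rank_eq_card {m n K : Type*} [Field K] [Fintype n]
    {A : Matrix m n K} : Function.Injective A.mulVec ↔ A.rank = Fintype.card n := by
  rw [mulVec_injective_iff, linearIndependent_iff_card_eq_finrank_span, rank_eq_finrank_span_cols,
    Set.finrank, eq_comm]

section CongruenceInverse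

variable {m n R : Type*} [Fintype m] [Fintype n] [DecidableEq m] [CommRing R]
  {A : Matrix n n R} {D : Matrix n m R}

theorem mul_inv_mul_transpose_mul_mul_self (h : IsUnit (Dᵀ * A * D).det) :
    D * (Dᵀ * A * D)⁻¹ * Dᵀ * (A * D) = D := by
  rw [Matrix.mul_assoc _ Dᵀ, ← Matrix.mul_assoc Dᵀ, Matrix.mul_assoc D, nonsing_inv_mul _ h,
    Matrix.mul_one]

theorem mul_inv_mul_transpose_mul_idem (h : IsUnit (Dᵀ * A * D).det) :
    D * (Dᵀ * A * D)⁻¹ * Dᵀ * A * (D * (Dᵀ * A * D)⁻¹ * Dᵀ) = D * (Dᵀ * A * D)⁻¹ * Dᵀ := by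
  calc _ = D * (Dᵀ * A * D)⁻¹ * Dᵀ * (A * D) * (Dᵀ * A * D)⁻¹ * Dᵀ := by
          simp only [Matrix.mul_assoc]
    _ = _ := by rw [mul_inv_mul_transpose_mul_mul_self h]

theorem rank_mul_inv_mul_transpose [StrongRankCondition R] (h : IsUnit (Dᵀ * A * D).det) :
    (D * (Dᵀ * A * D)⁻¹ * Dᵀ).rank = D.rank := by
  refine le_antisymm ?_ ?_
  · calc (D * (Dᵀ * A * D)⁻¹ * Dᵀ).rank
        ≤ (D * (Dᵀ * A * D)⁻¹).rank := rank_mul_le_left _ _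
      _ ≤ D.rank := rank_mul_le_left _ _
  · calc D.rank = (D * (Dᵀ * A * D)⁻¹ * Dᵀ * (A * D)).rank := by
          rw [mul_inv_mul_transpose_mul_mul_self h]
      _ ≤ (D * (Dᵀ * A * D)⁻¹ * Dᵀ).rank := rank_mul_le_left _ _

end CongruenceInverse

end Matrix

/-- With `H₀ = 0` in the block BFGS formula, the result is `H⁺ = D(DᵀGD)⁻¹Dᵀ`, which
satisfies `H⁺GH⁺ = H⁺` (so `H⁺G` is a projection), is positive semidefinite, and has
rank `q`. -/
theorem sdna_metric_special_case {d q : ℕ}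
    (G : Matrix (Fin d) (Fin d) ℝ) (hG : G.PosDef)
    (D : Matrix (Fin d) (Fin q) ℝ) (hD : D.rank = q) :
    let Hp := D * (Dᵀ * G * D)⁻¹ * Dᵀ
    Hp * G * Hp = Hp ∧ Hp.PosSemidef ∧ Hp.rank = q := by
  intro Hp
  have hDinj : Function.Injective D.mulVec :=
    mulVec_injective_iff_rank_eq_card.mpr (by rw [hD, Fintype.card_fin])
  have hS : (Dᵀ * G * D).PosDef := by
    simpa only [conjTranspose_eq_transpose_of_trivial] using hG.conjTranspose_mul_mul_same hDinj
  have hSdet : IsUnit (Dᵀ * G * D).det := (isUnit_iff_isUnit_det _).mp hS.isUnit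
  refine ⟨mul_inv_mul_transpose_mul_idem hSdet, ?_, ?_⟩
  · simpa only [conjTranspose_eq_transpose_of_trivial] using
      hS.inv.posSemidef.mul_mul_conjTranspose_same D
  · rw [rank_mul_inv_mul_transpose hSdet, hD]
end

section
/- Let H = LLᵀ with L invertible, G symmetric positive definite, D full column rank with Y = GD, Δ = (DᵀGD)⁻¹, V = I − DΔYᵀ, Gfac = (Dᵀ L^{-ᵀ}L^{-1} D)^{1/2}, R = Δ^{1/2}. Then L⁺ = V L + D R Gfac^{-1} Dᵀ L^{-ᵀ} satisfies L⁺(L⁺)ᵀ = DΔDᵀ + V H Vᵀ, i.e., L⁺ is a factored form of the block BFGS update. -/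
open Matrix

/-- Factored form of the block BFGS update: if `H = LLᵀ` with `L` invertible, `Y = GD`,
`Δ = (DᵀGD)⁻¹`, `V = I − DΔYᵀ`, `R = Δ^{1/2}` and `Gfac = (DᵀH⁻¹D)^{1/2}`, then
`L⁺ = VL + DRGfac⁻¹DᵀL⁻ᵀ` satisfies `L⁺(L⁺)ᵀ = DΔDᵀ + VHVᵀ`. -/
theorem block_bfgs_factored_form {d q : ℕ}
    (L G : Matrix (Fin d) (Fin d) ℝ) (hL : IsUnit L.det) (hG : G.PosDef)
    (D : Matrix (Fin d) (Fin q) ℝ) (hD : D.rank = q)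
    (R Gfac : Matrix (Fin q) (Fin q) ℝ)
    (hRpd : R.PosDef) (hRsq : R * R = (Dᵀ * G * D)⁻¹)
    (hGfacpd : Gfac.PosDef) (hGfacsq : Gfac * Gfac = Dᵀ * (L * Lᵀ)⁻¹ * D) :
    let Y := G * D
    let Δ := (Dᵀ * G * D)⁻¹
    let V := (1 : Matrix (Fin d) (Fin d) ℝ) - D * Δ * Yᵀ
    let Lp := V * L + D * R * Gfac⁻¹ * Dᵀ * (L⁻¹)ᵀ
    Lp * Lpᵀ = D * Δ * Dᵀ + V * (L * Lᵀ) * Vᵀ := by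
  intro Y Δ V Lp
  have hGs : Gᵀ = G := hG.1
  have hRs : Rᵀ = R := hRpd.1
  have hGfs : Gfacᵀ = Gfac := hGfacpd.1
  -- injectivity of D from rank
  have hinj : Function.Injective D.mulVecLin := by
    rw [← LinearMap.ker_eq_bot]
    have h := LinearMap.finrank_range_add_finrank_ker D.mulVecLin
    rw [show Module.finrank ℝ (LinearMap.range D.mulVecLin) = D.rank from rfl, hD,
      Module.finrank_fin_fun] at h
    exact Submodule.finrank_eq_zero.mp (by omega)
  -- A := Dᵀ G D is positive definite, hence invertible
  have hApd : (Dᵀ * G * D).PosDef := by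
    have hApsd : (Dᴴ * G * D).PosSemidef := hG.posSemidef.conjTranspose_mul_mul_same D
    refine posDef_iff_dotProduct_mulVec.mpr ⟨hApsd.1, fun x hx => ?_⟩
    have h0 : D *ᵥ x ≠ 0 := by
      intro h
      exact hx (hinj (a₂ := 0) (by simpa using h))
    simpa only [star_mulVec, dotProduct_mulVec, vecMul_vecMul, conjTranspose_eq_transpose_of_trivial] using (posDef_iff_dotProduct_mulVec.mp hG).2 (x := D *ᵥ x) h0
  have hAdet : IsUnit (Dᵀ * G * D).det := hApd.det_pos.ne'.isUnit
  have hΔA : Δ * (Dᵀ * G * D) = 1 := Matrix.nonsing_inv_mul _ hAdet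
  have hGfdet : IsUnit Gfac.det := hGfacpd.det_pos.ne'.isUnit
  have hGf1 : Gfac * Gfac⁻¹ = 1 := Matrix.mul_nonsing_inv _ hGfdet
  have hGf2 : Gfac⁻¹ * Gfac = 1 := Matrix.nonsing_inv_mul _ hGfdet
  have hGfi : (Gfac⁻¹)ᵀ = Gfac⁻¹ := by
    rw [Matrix.transpose_nonsing_inv, hGfs]
  have hLL : L * L⁻¹ = 1 := Matrix.mul_nonsing_inv L hL
  -- V D = 0
  have hVD : V * D = 0 := by
    show ((1 : Matrix (Fin d) (Fin d) ℝ) - D * Δ * Yᵀ) * D = 0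
    have hY : (Y : Matrix (Fin d) (Fin q) ℝ)ᵀ = Dᵀ * G := by
      show (G * D)ᵀ = Dᵀ * G
      rw [transpose_mul, hGs]
    rw [Matrix.sub_mul, Matrix.one_mul, hY, Matrix.mul_assoc (D * Δ) (Dᵀ * G) D,
      Matrix.mul_assoc D Δ ((Dᵀ * G) * D), hΔA, Matrix.mul_one, sub_self]
  set X := D * R * Gfac⁻¹ * Dᵀ * (L⁻¹)ᵀ with hXdef
  have hXT : Xᵀ = L⁻¹ * (D * (Gfac⁻¹ * (R * Dᵀ))) := by
    rw [hXdef]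
    simp only [transpose_mul, transpose_transpose, hGfi, hRs, Matrix.mul_assoc]
  have h3 : V * L * Xᵀ = 0 := by
    rw [hXT, Matrix.mul_assoc V L, ← Matrix.mul_assoc L L⁻¹, hLL, Matrix.one_mul,
      ← Matrix.mul_assoc V D, hVD, Matrix.zero_mul]
  have h4 : X * (Lᵀ * Vᵀ) = 0 := by
    have := congrArg Matrix.transpose h3
    simpa only [transpose_mul, transpose_transpose, transpose_zero, Matrix.mul_assoc] using this
  have hmid : Dᵀ * ((L⁻¹)ᵀ * (L⁻¹ * D)) = Gfac * Gfac := by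
    rw [hGfacsq, Matrix.mul_inv_rev, ← Matrix.transpose_nonsing_inv,
      Matrix.mul_assoc, Matrix.mul_assoc]
  have h5 : X * Xᵀ = D * Δ * Dᵀ := by
    calc X * Xᵀ
        = D * (R * (Gfac⁻¹ * (Dᵀ * ((L⁻¹)ᵀ * (L⁻¹ * D)) * (Gfac⁻¹ * (R * Dᵀ))))) := by
          rw [hXT, hXdef]; simp only [Matrix.mul_assoc]
      _ = D * (R * (Gfac⁻¹ * (Gfac * Gfac * (Gfac⁻¹ * (R * Dᵀ))))) := by rw [hmid]
      _ = D * (R * (R * Dᵀ)) := by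
          rw [Matrix.mul_assoc Gfac Gfac, ← Matrix.mul_assoc Gfac Gfac⁻¹, hGf1, Matrix.one_mul,
            ← Matrix.mul_assoc Gfac⁻¹ Gfac, hGf2, Matrix.one_mul]
      _ = D * Δ * Dᵀ := by rw [← Matrix.mul_assoc R R Dᵀ, hRsq, ← Matrix.mul_assoc D _ Dᵀ]
  have hexp : Lp * Lpᵀ = V * L * (Lᵀ * Vᵀ) + V * L * Xᵀ + (X * (Lᵀ * Vᵀ) + X * Xᵀ) := by
    show (V * L + X) * (V * L + X)ᵀ = _
    rw [transpose_add, transpose_mul, add_mul, mul_add, mul_add]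
  rw [hexp, h3, h4, h5, add_zero, zero_add, ← Matrix.mul_assoc (V * L) Lᵀ,
    Matrix.mul_assoc V L Lᵀ, add_comm]
end
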